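/- Let a₁, a₂ ∈ ℝ³ lie in the xy-plane with |a₁+a₂|+|a₁−a₂| > 2. If the plane R through the origin has normal vector n in the xy-plane (θ = π/2 in spherical coordinates), then |P_R(a₁+a₂)| + |P_R(a₁−a₂)| ≤ 2, where P_R is the orthogonal projection onto R. Consequently f(φ, π/2) ≥ 0 for all φ. -/

import Mathlib

open Real

/-- The vector `(v₀, v₁, v₂)` in Euclidean `ℝ³`. -/
noncomputable def e3 (v : Fin 3 → ℝ) : EuclideanSpace ℝ (Fin 3) :=
  (WithLp.equiv 2 (Fin 3 → ℝ)).symm v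

/-- Orthogonal projection of `ℝ³` onto the plane with unit normal `nv`. -/
noncomputable def projPlane (nv v : EuclideanSpace ℝ (Fin 3)) : EuclideanSpace ℝ (Fin 3) :=
  v - (inner ℝ v nv : ℝ) • nv

/-! For `v` in the `xy`-plane, projecting onto the plane with normal `(cos φ, sin φ, 0)` leaves
only the component of `v` along the unit vector `w = (-sin φ, cos φ, 0)`. So the two projected
lengths are `|s + t|` and `|s - t|` with `s = ⟪a₁, w⟫`, `t = ⟪a₂, w⟫`, and
`|s + t| + |s - t| = 2 max(|s|, |t|) ≤ 2 max(‖a₁‖, ‖a₂‖) ≤ 2`. -/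

theorem abs_add_add_abs_sub {α : Type*} [Field α] [LinearOrder α] [IsStrictOrderedRing α]
    (s t : α) : |s + t| + |s - t| = 2 * max |s| |t| := by
  rcases max_cases |s| |t| with ⟨h, _⟩ | ⟨h, _⟩ <;> rw [h] <;>
    cases abs_cases s <;> cases abs_cases t <;> cases abs_cases (s + t) <;>
      cases abs_cases (s - t) <;> linarith

theorem norm_e3_neg_sin_cos (φ : ℝ) : ‖e3 ![-sin φ, cos φ, 0]‖ = 1 := by
  rw [EuclideanSpace.norm_eq, Real.sqrt_eq_one]
  simp [e3, Fin.sum_univ_three, sin_sq_add_cos_sq]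

theorem projPlane_eq_inner_smul (φ : ℝ) (v : EuclideanSpace ℝ (Fin 3)) (hv : v 2 = 0) :
    projPlane (e3 ![cos φ, sin φ, 0]) v
      = inner ℝ v (e3 ![-sin φ, cos φ, 0]) • e3 ![-sin φ, cos φ, 0] := by
  ext i
  fin_cases i <;> simp [projPlane, e3, PiLp.inner_apply, Fin.sum_univ_three, hv]
  · linear_combination -v 0 * sin_sq_add_cos_sq φ
  · linear_combination -v 1 * sin_sq_add_cos_sq φ

theorem norm_projPlane_eq_abs_inner (φ : ℝ) (v : EuclideanSpace ℝ (Fin 3)) (hv : v 2 = 0) :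
    ‖projPlane (e3 ![cos φ, sin φ, 0]) v‖ = |inner ℝ v (e3 ![-sin φ, cos φ, 0])| := by
  rw [projPlane_eq_inner_smul φ v hv, norm_smul, norm_e3_neg_sin_cos, Real.norm_eq_abs, mul_one]

theorem abs_inner_e3_neg_sin_cos_le_norm (φ : ℝ) (v : EuclideanSpace ℝ (Fin 3)) :
    |inner ℝ v (e3 ![-sin φ, cos φ, 0])| ≤ ‖v‖ := by
  simpa [norm_e3_neg_sin_cos] using abs_real_inner_le_norm v (e3 ![-sin φ, cos φ, 0])

theorem stmt8_general (a₁ a₂ : EuclideanSpace ℝ (Fin 3)) (φ : ℝ)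
    (hz₁ : a₁ 2 = 0) (hz₂ : a₂ 2 = 0)
    (h₁ : ‖a₁‖ ≤ 1) (h₂ : ‖a₂‖ ≤ 1) :
    ‖projPlane (e3 ![cos φ, sin φ, 0]) (a₁ + a₂)‖
      + ‖projPlane (e3 ![cos φ, sin φ, 0]) (a₁ - a₂)‖ ≤ 2 := by
  have hadd : (a₁ + a₂) 2 = 0 := by simp [hz₁, hz₂]
  have hsub : (a₁ - a₂) 2 = 0 := by simp [hz₁, hz₂]
  rw [norm_projPlane_eq_abs_inner φ _ hadd, norm_projPlane_eq_abs_inner φ _ hsub,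
    inner_add_left, inner_sub_left, abs_add_add_abs_sub]
  have hmax := max_le ((abs_inner_e3_neg_sin_cos_le_norm φ a₁).trans h₁)
    ((abs_inner_e3_neg_sin_cos_le_norm φ a₂).trans h₂)
  linarith

/-- If `a₁, a₂` lie in the `xy`-plane with `|a₁+a₂| + |a₁−a₂| > 2` and the plane `R`
has its normal `n = (cos φ, sin φ, 0)` in the `xy`-plane, then
`|P_R(a₁+a₂)| + |P_R(a₁−a₂)| ≤ 2`. -/
theorem stmt8 (a₁ a₂ : EuclideanSpace ℝ (Fin 3)) (φ : ℝ)
    (hz₁ : a₁ 2 = 0) (hz₂ : a₂ 2 = 0)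
    (h₁ : ‖a₁‖ ≤ 1) (h₂ : ‖a₂‖ ≤ 1)
    (hinc : ‖a₁ + a₂‖ + ‖a₁ - a₂‖ > 2) :
    ‖projPlane (e3 ![cos φ, sin φ, 0]) (a₁ + a₂)‖
      + ‖projPlane (e3 ![cos φ, sin φ, 0]) (a₁ - a₂)‖ ≤ 2 :=
  stmt8_general a₁ a₂ φ hz₁ hz₂ h₁ h₂
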